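/- With the notation of the previous statement, if additionally V ⪰ H ≻ 0 and V ⪰ G + λ_min I ≻ 0 where G = Σ_{t=1}^n φ_t φ_tᵀ, then ‖θ* − θ̂‖_V ≤ ‖Σ_{t=1}^n φ_t η_t‖_{(G + λ_min I)^{-1}} + ‖θ*‖_H + ‖h‖_{H^{-1}}. -/

import Mathlib

/-! Write `‖x‖_M = √(xᵀ M x)`. The normal equations give `V (θ* − θ̂) = H θ* − Σ η_t φ_t − h`,
so `‖θ* − θ̂‖_V = ‖H θ* − Σ η_t φ_t − h‖_{V⁻¹}`. The triangle inequality for the seminorm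
`‖·‖_{V⁻¹}` splits this into three terms, each bounded by `A ⪰ B ≻ 0 ⇒ ‖x‖_{A⁻¹} ≤ ‖x‖_{B⁻¹}`;
that monotonicity comes from the variational formula `xᵀ B⁻¹ x = max_y (2 yᵀx − yᵀ B y)`. -/

open Matrix

namespace Matrix

variable {n : Type*} [Fintype n]

lemma sqrt_dotProduct_mulVec_sub_le {M : Matrix n n ℝ} (hM : M.PosSemidef) (x y : n → ℝ) :
    √((x - y) ⬝ᵥ M *ᵥ (x - y)) ≤ √(x ⬝ᵥ M *ᵥ x) + √(y ⬝ᵥ M *ᵥ y) := by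
  simp only [dotProduct_comm _ (M *ᵥ _)]
  -- the norm of `M.toSeminormedAddCommGroup hM` is `z ↦ √((M *ᵥ z) ⬝ᵥ star z)` by definition
  exact @norm_sub_le _ (M.toSeminormedAddCommGroup hM).toSeminormedAddGroup x y

lemma IsSymm.dotProduct_mulVec_comm {M : Matrix n n ℝ} (hM : M.IsSymm) (x y : n → ℝ) :
    x ⬝ᵥ M *ᵥ y = y ⬝ᵥ M *ᵥ x := by
  rw [dotProduct_mulVec, ← mulVec_transpose, hM.eq, dotProduct_comm]

lemma sum_vecMulVec_self_mulVec {ι : Type*} [Fintype ι] (φ : ι → n → ℝ) (θ : n → ℝ) :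
    (∑ t, vecMulVec (φ t) (φ t)) *ᵥ θ = ∑ t, (φ t ⬝ᵥ θ) • φ t := by
  simp only [sum_mulVec, vecMulVec_mulVec, op_smul_eq_smul]

variable [DecidableEq n]

lemma dotProduct_inv_mulVec_mulVec {M : Matrix n n ℝ} (hM : IsUnit M) (x : n → ℝ) :
    (M *ᵥ x) ⬝ᵥ M⁻¹ *ᵥ (M *ᵥ x) = x ⬝ᵥ M *ᵥ x := by
  rw [mulVec_mulVec, nonsing_inv_mul M ((isUnit_iff_isUnit_det M).mp hM), one_mulVec,
    dotProduct_comm]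

lemma PosDef.two_mul_dotProduct_sub_le {B : Matrix n n ℝ} (hB : B.PosDef) (x y : n → ℝ) :
    2 * (y ⬝ᵥ x) - y ⬝ᵥ B *ᵥ y ≤ x ⬝ᵥ B⁻¹ *ᵥ x := by
  set z := B⁻¹ *ᵥ x
  have hBz : B *ᵥ z = x := by
    rw [mulVec_mulVec, mul_nonsing_inv B ((isUnit_iff_isUnit_det B).mp hB.isUnit), one_mulVec]
  have hB_symm : B.IsSymm := isHermitian_iff_isSymm.mp hB.isHermitian
  have hexpand : (y - z) ⬝ᵥ B *ᵥ (y - z) = y ⬝ᵥ B *ᵥ y - 2 * (y ⬝ᵥ x) + x ⬝ᵥ z := by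
    rw [mulVec_sub, sub_dotProduct, dotProduct_sub, dotProduct_sub, hBz,
      hB_symm.dotProduct_mulVec_comm z y, hBz, dotProduct_comm z x]
    ring
  have hnonneg := hB.posSemidef.dotProduct_mulVec_nonneg (y - z)
  rw [star_trivial] at hnonneg
  linarith

lemma dotProduct_inv_mulVec_le_of_posSemidef_sub {A B : Matrix n n ℝ} (hB : B.PosDef)
    (hAB : (A - B).PosSemidef) (x : n → ℝ) :
    x ⬝ᵥ A⁻¹ *ᵥ x ≤ x ⬝ᵥ B⁻¹ *ᵥ x := by
  have hA : A.PosDef := by simpa using hB.add_posSemidef hAB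
  set y := A⁻¹ *ᵥ x
  have hAy : A *ᵥ y = x := by
    rw [mulVec_mulVec, mul_nonsing_inv A ((isUnit_iff_isUnit_det A).mp hA.isUnit), one_mulVec]
  have hAB_y := hAB.dotProduct_mulVec_nonneg y
  rw [star_trivial, sub_mulVec, dotProduct_sub, hAy] at hAB_y
  have hxy : x ⬝ᵥ y = y ⬝ᵥ x := dotProduct_comm x y
  linarith [hB.two_mul_dotProduct_sub_le x y]

lemma mulVec_sub_inv_mulVec_sum_add {ι : Type*} [Fintype ι] {φ : ι → n → ℝ} {η y : ι → ℝ}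
    {θ : n → ℝ} (hy : ∀ t, y t = φ t ⬝ᵥ θ + η t) {H : Matrix n n ℝ} (h : n → ℝ)
    (hV : IsUnit (∑ t, vecMulVec (φ t) (φ t) + H)) :
    (∑ t, vecMulVec (φ t) (φ t) + H) *ᵥ
        (θ - (∑ t, vecMulVec (φ t) (φ t) + H)⁻¹ *ᵥ ((∑ t, y t • φ t) + h)) =
      H *ᵥ θ - ∑ t, η t • φ t - h := by
  have hsum : ∑ t, y t • φ t = ∑ t, (φ t ⬝ᵥ θ) • φ t + ∑ t, η t • φ t := by
    simp only [hy, add_smul, Finset.sum_add_distrib]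
  rw [mulVec_sub, mulVec_mulVec, mul_nonsing_inv _ ((isUnit_iff_isUnit_det _).mp hV),
    one_mulVec, add_mulVec, sum_vecMulVec_self_mulVec, hsum]
  abel

end Matrix

theorem noisy_lse_confidence_general {d n : ℕ}
    (φ : Fin n → Fin d → ℝ) (η : Fin n → ℝ) (θstar : Fin d → ℝ) (y : Fin n → ℝ)
    (hy : ∀ t, y t = φ t ⬝ᵥ θstar + η t)
    (H : Matrix (Fin d) (Fin d) ℝ) (hH : H.PosDef) (h : Fin d → ℝ)
    (G : Matrix (Fin d) (Fin d) ℝ) (hGdef : G = ∑ t, vecMulVec (φ t) (φ t))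
    (V : Matrix (Fin d) (Fin d) ℝ) (hVdef : V = G + H)
    (θhat : Fin d → ℝ)
    (hθhat : θhat = V⁻¹ *ᵥ ((∑ t, y t • φ t) + h))
    (lamMin : ℝ)
    (hVH : (V - H).PosSemidef)
    (hGlam : (G + lamMin • (1 : Matrix (Fin d) (Fin d) ℝ)).PosDef)
    (hVG : (V - (G + lamMin • (1 : Matrix (Fin d) (Fin d) ℝ))).PosSemidef) :
    Real.sqrt ((θstar - θhat) ⬝ᵥ V *ᵥ (θstar - θhat)) ≤
      Real.sqrt ((∑ t, η t • φ t) ⬝ᵥ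
          (G + lamMin • (1 : Matrix (Fin d) (Fin d) ℝ))⁻¹ *ᵥ (∑ t, η t • φ t))
      + Real.sqrt (θstar ⬝ᵥ H *ᵥ θstar)
      + Real.sqrt (h ⬝ᵥ H⁻¹ *ᵥ h) := by
  set S := ∑ t, η t • φ t
  have hV : V.PosDef := by simpa using hGlam.add_posSemidef hVG
  have herr : V *ᵥ (θstar - θhat) = H *ᵥ θstar - S - h := by
    subst hGdef hVdef hθhat
    exact mulVec_sub_inv_mulVec_sum_add hy h hV.isUnit
  have hVinv := hV.inv.posSemidef
  calc √((θstar - θhat) ⬝ᵥ V *ᵥ (θstar - θhat))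
      = √((H *ᵥ θstar - S - h) ⬝ᵥ V⁻¹ *ᵥ (H *ᵥ θstar - S - h)) := by
        rw [← herr, dotProduct_inv_mulVec_mulVec hV.isUnit]
    _ ≤ √((H *ᵥ θstar) ⬝ᵥ V⁻¹ *ᵥ (H *ᵥ θstar)) + √(S ⬝ᵥ V⁻¹ *ᵥ S) + √(h ⬝ᵥ V⁻¹ *ᵥ h) :=
        (sqrt_dotProduct_mulVec_sub_le hVinv _ h).trans
          (add_le_add_left (sqrt_dotProduct_mulVec_sub_le hVinv _ S) _)
    _ ≤ √((H *ᵥ θstar) ⬝ᵥ H⁻¹ *ᵥ (H *ᵥ θstar)) + √(S ⬝ᵥ (G + lamMin • 1)⁻¹ *ᵥ S)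
          + √(h ⬝ᵥ H⁻¹ *ᵥ h) := by
        gcongr
        exacts [dotProduct_inv_mulVec_le_of_posSemidef_sub hH hVH _,
          dotProduct_inv_mulVec_le_of_posSemidef_sub hGlam hVG S,
          dotProduct_inv_mulVec_le_of_posSemidef_sub hH hVH h]
    _ = _ := by rw [dotProduct_inv_mulVec_mulVec hH.isUnit]; ring

theorem noisy_lse_confidence {d n : ℕ}
    (φ : Fin n → Fin d → ℝ) (η : Fin n → ℝ) (θstar : Fin d → ℝ) (y : Fin n → ℝ)
    (hy : ∀ t, y t = φ t ⬝ᵥ θstar + η t)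
    (H : Matrix (Fin d) (Fin d) ℝ) (hH : H.PosDef) (h : Fin d → ℝ)
    (G : Matrix (Fin d) (Fin d) ℝ) (hGdef : G = ∑ t, vecMulVec (φ t) (φ t))
    (V : Matrix (Fin d) (Fin d) ℝ) (hVdef : V = G + H)
    (θhat : Fin d → ℝ)
    (hθhat : θhat = V⁻¹ *ᵥ ((∑ t, y t • φ t) + h))
    (lamMin : ℝ) (hlamMin : 0 < lamMin)
    (hVH : (V - H).PosSemidef)
    (hGlam : (G + lamMin • (1 : Matrix (Fin d) (Fin d) ℝ)).PosDef)
    (hVG : (V - (G + lamMin • (1 : Matrix (Fin d) (Fin d) ℝ))).PosSemidef) :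
    Real.sqrt ((θstar - θhat) ⬝ᵥ V *ᵥ (θstar - θhat)) ≤
      Real.sqrt ((∑ t, η t • φ t) ⬝ᵥ
          (G + lamMin • (1 : Matrix (Fin d) (Fin d) ℝ))⁻¹ *ᵥ (∑ t, η t • φ t))
      + Real.sqrt (θstar ⬝ᵥ H *ᵥ θstar)
      + Real.sqrt (h ⬝ᵥ H⁻¹ *ᵥ h) :=
  noisy_lse_confidence_general φ η θstar y hy H hH h G hGdef V hVdef θhat hθhat lamMin hVH hGlam hVG
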